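/- For each c ∈ ℝ, the convex set of functions dominated by L+c is stable under the invariant mean: let λ be the normalized Haar probability measure on the compact topological group Γ_H, and for u ∈ C⁰(M,ℝ) define (Mu)(x) = ∫_{Γ_H} u(g(x)) dλ(g). If u ≺ L+c, then Mu is a continuous Γ_H-invariant function and Mu ≺ L+c. -/

import Mathlib

open scoped Manifold
open Bundle Set

noncomputable section

namespace WeakKAM

variable (n : ℕ) {M : Type*} [TopologicalSpace M] [ChartedSpace (EuclideanSpace ℝ (Fin n)) M]
  [IsManifold (𝓡 n) ((⊤ : ℕ∞) : WithTop ℕ∞) M]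

instance (x : M) : NormedAddCommGroup (TangentSpace (𝓡 n) x) :=
  inferInstanceAs (NormedAddCommGroup (EuclideanSpace ℝ (Fin n)))

instance (x : M) : NormedSpace ℝ (TangentSpace (𝓡 n) x) :=
  inferInstanceAs (NormedSpace ℝ (EuclideanSpace ℝ (Fin n)))

abbrev Cot (x : M) : Type _ := TangentSpace (𝓡 n) x →L[ℝ] ℝ

/-- The cotangent bundle of `M`, as a bundle of continuous linear maps. -/
abbrev CotBundle : M → Type _ :=
  fun x : M => TangentSpace (𝓡 n) x →SL[RingHom.id ℝ] Bundle.Trivial M ℝ x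

/-- Smoothness (`C^∞`) of a Hamiltonian, as a function on the total space of the
cotangent bundle. -/
def SmoothHam (H : ∀ x : M, Cot n x → ℝ) : Prop :=
  ContMDiff ((𝓡 n).prod 𝓘(ℝ, EuclideanSpace ℝ (Fin n) →L[ℝ] ℝ)) 𝓘(ℝ, ℝ) (⊤ : ℕ∞)
    (fun q : TotalSpace (EuclideanSpace ℝ (Fin n) →L[ℝ] ℝ) (CotBundle n (M := M)) =>
      H q.proj q.2)

def vel (γ : ℝ → M) (s : ℝ) : TangentSpace (𝓡 n) (γ s) :=
  mfderiv 𝓘(ℝ, ℝ) (𝓡 n) γ s (1 : ℝ)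

/-- A piecewise `C¹` curve `γ : [a,b] → M`. -/
def PiecewiseC1On (γ : ℝ → M) (a b : ℝ) : Prop :=
  ContinuousOn γ (Icc a b) ∧
    ∃ (k : ℕ) (t : Fin (k + 1) → ℝ), StrictMono t ∧ t 0 = a ∧ t (Fin.last k) = b ∧
      ∀ i : Fin k, ContMDiffOn 𝓘(ℝ, ℝ) (𝓡 n) 1 γ (Icc (t i.castSucc) (t i.succ))

/-- The action of a curve `γ : [a,b] → M` for the Lagrangian `L`. -/
def action (L : ∀ x : M, TangentSpace (𝓡 n) x → ℝ) (γ : ℝ → M) (a b : ℝ) : ℝ :=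
  ∫ s in a..b, L (γ s) (vel n γ s)

/-- `u ≺ L + c` : `u` is dominated by `L + c`. -/
def Dominated (L : ∀ x : M, TangentSpace (𝓡 n) x → ℝ) (c : ℝ) (u : M → ℝ) : Prop :=
  ∀ (γ : ℝ → M) (a b : ℝ), a ≤ b → PiecewiseC1On n γ a b →
    u (γ b) - u (γ a) ≤ action n L γ a b + c * (b - a)

/-- Backward weak KAM solution for the value `c`. -/
def BackwardWeakKAM (L : ∀ x : M, TangentSpace (𝓡 n) x → ℝ) (c : ℝ) (u : M → ℝ) : Prop :=
  Dominated n L c u ∧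
    ∀ x : M, ∃ γ : ℝ → M, γ 0 = x ∧ ContMDiffOn 𝓘(ℝ, ℝ) (𝓡 n) 1 γ (Iic 0) ∧
      ∀ t : ℝ, 0 ≤ t → u x - u (γ (-t)) = action n L γ (-t) 0 + c * t

/-- Forward weak KAM solution for the value `c`. -/
def ForwardWeakKAM (L : ∀ x : M, TangentSpace (𝓡 n) x → ℝ) (c : ℝ) (u : M → ℝ) : Prop :=
  Dominated n L c u ∧
    ∀ x : M, ∃ γ : ℝ → M, γ 0 = x ∧ ContMDiffOn 𝓘(ℝ, ℝ) (𝓡 n) 1 γ (Ici 0) ∧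
      ∀ t : ℝ, 0 ≤ t → u (γ t) - u x = action n L γ 0 t + c * t

/-- `g` is a `C¹` diffeomorphism of `M`. -/
def IsC1Diffeo (g : M → M) : Prop :=
  ∃ h : M → M, Function.LeftInverse h g ∧ Function.RightInverse h g ∧
    ContMDiff (𝓡 n) (𝓡 n) 1 g ∧ ContMDiff (𝓡 n) (𝓡 n) 1 h

/-- `g` belongs to the symmetry group `Γ_H` of `H`. -/
def IsSymmetry (H : ∀ x : M, Cot n x → ℝ) (g : M → M) : Prop :=
  IsC1Diffeo n g ∧ ∀ (x : M) (p : Cot n (g x)),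
    H (g x) p = H x (p.comp (mfderiv (𝓡 n) (𝓡 n) g x))

/-- The symmetry group `Γ_H` of `H`, as a subset of `C⁰(M,M)` (with the compact-open
topology, i.e. the topology of uniform convergence). -/
def GammaH (H : ∀ x : M, Cot n x → ℝ) : Set C(M, M) :=
  {g : C(M, M) | IsSymmetry n H ⇑g}

/-- The identity component `Γ_H⁰` of the symmetry group of `H`. -/
def GammaH0 (H : ∀ x : M, Cot n x → ℝ) : Set C(M, M) :=
  connectedComponentIn (GammaH n H) (ContinuousMap.id M)

def StrictlyConvexFib (H : ∀ x : M, Cot n x → ℝ) : Prop :=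
  ∀ (x : M) (p q : Cot n x), q ≠ 0 → 0 < iteratedFDeriv ℝ 2 (H x) p ![q, q]

def Superlinear (H : ∀ x : M, Cot n x → ℝ) : Prop :=
  ∀ K : ℝ, ∃ C : ℝ, ∀ (x : M) (p : Cot n x), K * ‖p‖ + C ≤ H x p

def Lag (H : ∀ x : M, Cot n x → ℝ) (x : M) (v : TangentSpace (𝓡 n) x) : ℝ :=
  ⨆ p : Cot n x, (p v - H x p)

/-!
A symmetry `g` of `H` preserves the Lagrangian, because `p ↦ p ∘ d_xg` is a bijection of
covectors, so `g` maps piecewise `C¹` curves to curves of the same action and `u ∘ g ≺ L + c`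
for every `g ∈ Γ_H`. The set of `g ∈ C⁰(M,M)` with `u ∘ g ≺ L + c` is closed, hence measurable,
and contains `Γ_H`, so it has full `λ`-measure; integrating the inequalities
`u (g (γ b)) - u (g (γ a)) ≤ A_L(γ) + c (b - a)` over `λ` gives `Mu ≺ L + c`.
-/

section

variable {n}

set_option linter.unusedSectionVars false

theorem IsSymmetry.lag_mfderiv {H : ∀ x : M, Cot n x → ℝ} {g : M → M} (hg : IsSymmetry n H g)
    (x : M) (v : TangentSpace (𝓡 n) x) :
    Lag n H (g x) (mfderiv (𝓡 n) (𝓡 n) g x v) = Lag n H x v := by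
  obtain ⟨⟨h, hhg, -, hg₁, hh₁⟩, hH⟩ := hg
  have hinv : ∀ w, mfderiv (𝓡 n) (𝓡 n) h (g x) (mfderiv (𝓡 n) (𝓡 n) g x w) = w := fun w => by
    rw [← ContinuousLinearMap.comp_apply,
      ← mfderiv_comp x (hh₁.mdifferentiable one_ne_zero _) (hg₁.mdifferentiable one_ne_zero _),
      hhg.comp_eq_id, mfderiv_id]
    rfl
  have hpullback_surj : Function.Surjective
      (fun p : Cot n (g x) => p.comp (mfderiv (𝓡 n) (𝓡 n) g x) : Cot n (g x) → Cot n x) :=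
    fun q => ⟨q.comp (mfderiv (𝓡 n) (𝓡 n) h (g x)),
      ContinuousLinearMap.ext fun w => congrArg q (hinv w)⟩
  calc Lag n H (g x) (mfderiv (𝓡 n) (𝓡 n) g x v)
      = ⨆ p : Cot n (g x), ((p.comp (mfderiv (𝓡 n) (𝓡 n) g x)) v
          - H x (p.comp (mfderiv (𝓡 n) (𝓡 n) g x))) := by simp only [Lag, hH x]; rfl
    _ = Lag n H x v := hpullback_surj.iSup_comp fun q => q v - H x q

theorem exists_mem_Ioc_of_monotone {β : Type*} [LinearOrder β] {k : ℕ} {t : Fin (k + 1) → β}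
    (ht : Monotone t) {s : β} (hs : s ∈ Ioc (t 0) (t (Fin.last k))) :
    ∃ i : Fin k, s ∈ Ioc (t i.castSucc) (t i.succ) := by
  rw [← ht.biUnion_Ico_Ioc_map_succ, mem_iUnion₂] at hs
  obtain ⟨i, hi, hsi⟩ := hs
  obtain ⟨j, rfl⟩ := Fin.eq_castSucc_of_ne_last hi.2.ne
  exact ⟨j, by rwa [Fin.orderSucc_castSucc] at hsi⟩

theorem PiecewiseC1On.le {γ : ℝ → M} {a b : ℝ} (hγ : PiecewiseC1On n γ a b) : a ≤ b := by
  obtain ⟨-, k, t, ht, rfl, rfl, -⟩ := hγ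
  exact ht.monotone (Fin.zero_le _)

theorem PiecewiseC1On.ae_mdifferentiableAt {γ : ℝ → M} {a b : ℝ} (hγ : PiecewiseC1On n γ a b) :
    ∀ᵐ s : ℝ, s ∈ uIoc a b → MDifferentiableAt 𝓘(ℝ, ℝ) (𝓡 n) γ s := by
  rw [uIoc_of_le hγ.le]
  obtain ⟨-, k, t, ht, rfl, rfl, hsmooth⟩ := hγ
  filter_upwards [(finite_range t).countable.ae_notMem MeasureTheory.volume] with s hst hs
  obtain ⟨i, hi⟩ := exists_mem_Ioc_of_monotone ht.monotone hs
  have hlt : s < t i.succ := hi.2.lt_of_ne fun h => hst ⟨_, h.symm⟩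
  exact ((hsmooth i).contMDiffAt (Icc_mem_nhds hi.1 hlt)).mdifferentiableAt one_ne_zero

theorem vel_comp {g : M → M} {γ : ℝ → M} {s : ℝ}
    (hg : MDifferentiableAt (𝓡 n) (𝓡 n) g (γ s)) (hγ : MDifferentiableAt 𝓘(ℝ, ℝ) (𝓡 n) γ s) :
    vel n (g ∘ γ) s = mfderiv (𝓡 n) (𝓡 n) g (γ s) (vel n γ s) := by
  rw [vel, mfderiv_comp s hg hγ]
  rfl

theorem PiecewiseC1On.comp {g : M → M} (hg : ContMDiff (𝓡 n) (𝓡 n) 1 g)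
    {γ : ℝ → M} {a b : ℝ} (hγ : PiecewiseC1On n γ a b) : PiecewiseC1On n (g ∘ γ) a b := by
  obtain ⟨hcont, k, t, ht, ha, hb, hsmooth⟩ := hγ
  exact ⟨hg.continuous.comp_continuousOn hcont, k, t, ht, ha, hb,
    fun i => hg.comp_contMDiffOn (hsmooth i)⟩

theorem IsSymmetry.action_comp {H : ∀ x : M, Cot n x → ℝ} {g : M → M} (hg : IsSymmetry n H g)
    {γ : ℝ → M} {a b : ℝ} (hγ : PiecewiseC1On n γ a b) :
    action n (Lag n H) (g ∘ γ) a b = action n (Lag n H) γ a b := by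
  obtain ⟨-, -, -, hg₁, -⟩ := hg.1
  refine intervalIntegral.integral_congr_ae ?_
  filter_upwards [hγ.ae_mdifferentiableAt] with s hγs hs
  change Lag n H (g (γ s)) (vel n (g ∘ γ) s) = Lag n H (γ s) (vel n γ s)
  rw [vel_comp (hg₁.mdifferentiable one_ne_zero _) (hγs hs)]
  exact hg.lag_mfderiv (γ s) (vel n γ s)

theorem Dominated.comp_of_isSymmetry {H : ∀ x : M, Cot n x → ℝ} {c : ℝ} {u : M → ℝ}
    (hu : Dominated n (Lag n H) c u) {g : M → M} (hg : IsSymmetry n H g) :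
    Dominated n (Lag n H) c (u ∘ g) := by
  intro γ a b hab hγ
  obtain ⟨-, -, -, hg₁, -⟩ := hg.1
  have hgγ := hu (g ∘ γ) a b hab (hγ.comp hg₁)
  rwa [hg.action_comp hγ] at hgγ

theorem isClosed_setOf_dominated_comp (L : ∀ x : M, TangentSpace (𝓡 n) x → ℝ) (c : ℝ)
    {u : M → ℝ} (hu : Continuous u) :
    IsClosed {g : C(M, M) | Dominated n L c (u ∘ ⇑g)} := by
  simp only [Dominated, ofPred_forall]
  refine isClosed_iInter fun γ => isClosed_iInter fun a => isClosed_iInter fun b =>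
    isClosed_iInter fun _ => isClosed_iInter fun _ => isClosed_le ?_ continuous_const
  exact (hu.comp (continuous_eval_const _)).sub (hu.comp (continuous_eval_const _))

theorem Dominated.integral {Ω : Type*} [MeasurableSpace Ω] {μ : MeasureTheory.Measure Ω}
    [MeasureTheory.IsProbabilityMeasure μ] {L : ∀ x : M, TangentSpace (𝓡 n) x → ℝ} {c : ℝ}
    {f : Ω → M → ℝ} (hf : ∀ x, MeasureTheory.Integrable (fun ω => f ω x) μ)
    (hdom : ∀ᵐ ω ∂μ, Dominated n L c (f ω)) :
    Dominated n L c (fun x => ∫ ω, f ω x ∂μ) := by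
  intro γ a b hab hγ
  rw [← MeasureTheory.integral_sub (hf _) (hf _)]
  calc ∫ ω, (f ω (γ b) - f ω (γ a)) ∂μ
      ≤ ∫ _ω, (action n L γ a b + c * (b - a)) ∂μ :=
        MeasureTheory.integral_mono_ae ((hf _).sub (hf _)) (MeasureTheory.integrable_const _)
          (hdom.mono fun ω hω => hω γ a b hab hγ)
    _ = action n L γ a b + c * (b - a) := by simp

end

section Averaging

open MeasureTheory

theorem integral_comp_eval_of_map_comp_right_eq {X : Type*} [TopologicalSpace X]
    [MeasurableSpace C(X, X)] [BorelSpace C(X, X)] {μ : Measure C(X, X)} {g : C(X, X)}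
    (hμ : μ.map (fun h : C(X, X) => h.comp g) = μ) {u : X → ℝ} (hu : Continuous u) (x : X) :
    ∫ h : C(X, X), u (h (g x)) ∂μ = ∫ h : C(X, X), u (h x) ∂μ := by
  conv_rhs => rw [← hμ]
  exact (integral_map (ContinuousMap.continuous_precomp g).aemeasurable
    (hu.comp (continuous_eval_const x)).aestronglyMeasurable).symm

variable {X Y : Type*} [TopologicalSpace X] [TopologicalSpace Y] [CompactSpace Y]
  [MeasurableSpace C(X, Y)] [OpensMeasurableSpace C(X, Y)] {μ : Measure C(X, Y)} [IsFiniteMeasure μ]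
  {u : Y → ℝ}

theorem integrable_comp_eval (hu : Continuous u) (x : X) :
    Integrable (fun g : C(X, Y) => u (g x)) μ := by
  obtain ⟨C, hC⟩ := isCompact_univ.exists_bound_of_continuousOn hu.continuousOn
  exact (integrable_const C).mono' (hu.comp (continuous_eval_const x)).aestronglyMeasurable
    (ae_of_all _ fun g => hC (g x) trivial)

theorem continuous_integral_comp_eval [FirstCountableTopology X] (hu : Continuous u) :
    Continuous fun x : X => ∫ g : C(X, Y), u (g x) ∂μ := by
  obtain ⟨C, hC⟩ := isCompact_univ.exists_bound_of_continuousOn hu.continuousOn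
  exact continuous_of_dominated (fun x => (hu.comp (continuous_eval_const x)).aestronglyMeasurable)
    (fun x => ae_of_all _ fun g => hC (g x) trivial) (integrable_const C)
    (ae_of_all _ fun g => hu.comp g.continuous)

end Averaging

theorem invariant_mean_preserves_domination
    [CompactSpace M]
    [MeasurableSpace C(M, M)] [BorelSpace C(M, M)]
    (H : ∀ x : M, Cot n x → ℝ)
    (lam : MeasureTheory.Measure C(M, M)) [MeasureTheory.IsProbabilityMeasure lam]
    (hfull : lam (GammaH n H) = 1)
    (hright : ∀ g₀ ∈ GammaH n H,
      MeasureTheory.Measure.map (fun h : C(M, M) => h.comp g₀) lam = lam)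
    (c : ℝ) (u : M → ℝ) (hu_cont : Continuous u) (hu : Dominated n (Lag n H) c u) :
    Continuous (fun x : M => ∫ g : C(M, M), u (g x) ∂lam) ∧
      (∀ g ∈ GammaH n H, ∀ x : M,
        (∫ g' : C(M, M), u (g' (g x)) ∂lam) = ∫ g' : C(M, M), u (g' x) ∂lam) ∧
      Dominated n (Lag n H) c (fun x : M => ∫ g : C(M, M), u (g x) ∂lam) := by
  have : SecondCountableTopology M :=
    ChartedSpace.secondCountable_of_sigmaCompact (EuclideanSpace ℝ (Fin n)) M
  have hdom_ae : ∀ᵐ g : C(M, M) ∂lam, Dominated n (Lag n H) c (u ∘ ⇑g) := by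
    refine (MeasureTheory.ae_iff_measure_eq
      (isClosed_setOf_dominated_comp (Lag n H) c hu_cont).measurableSet.nullMeasurableSet).2 ?_
    refine le_antisymm (MeasureTheory.measure_mono (subset_univ _)) ?_
    rw [MeasureTheory.measure_univ, ← hfull]
    exact MeasureTheory.measure_mono fun g hg => hu.comp_of_isSymmetry hg
  exact ⟨continuous_integral_comp_eval hu_cont,
    fun g hg => integral_comp_eval_of_map_comp_right_eq (hright g hg) hu_cont,
    Dominated.integral (integrable_comp_eval hu_cont) hdom_ae⟩

end WeakKAM
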